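/- Let V be a d-dimensional real inner product space, G a compact group acting on V by isometries, v ∈ V, and k a positive integer. Then ∫_{S(V)} (∫_G ⟨c, gv⟩^{2k} dg)^{1/(2k)} dc ≤ √(2k⟨v,v⟩/d), where S(V) is the unit sphere of V with its rotation-invariant probability measure dc and dg is the Haar probability measure on G. -/

import Mathlib

open MeasureTheory

/-- The map induced on the unit sphere by a linear isometry (a "rotation"). -/
def sphereRot {E : Type*} [NormedAddCommGroup E] [InnerProductSpace ℝ E]
    (g : E ≃ₗᵢ[ℝ] E) (x : Metric.sphere (0 : E) 1) : Metric.sphere (0 : E) 1 :=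
  ⟨g x, by
    have hx : ‖(x : E)‖ = 1 := by
      simpa only [Metric.mem_sphere, dist_zero_right] using x.2
    simp only [Metric.mem_sphere, dist_zero_right, g.norm_map]
    exact hx⟩

open scoped RealInnerProductSpace

section Khintchine
open Finset


/-- Double factorial `(2k-1)!! = ∏_{j<k} (2j+1)`. -/
def dfac : ℕ → ℕ
  | 0 => 0 + 1
  | (k+1) => (2*k+1) * dfac k

lemma dfac_pos (k : ℕ) : 0 < dfac k := by
  induction k with
  | zero => simp [dfac]
  | succ k ih => exact Nat.mul_pos (by omega) ih

lemma dfac_mul (k : ℕ) : dfac k * (2^k * k.factorial) = (2*k).factorial := by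
  induction k with
  | zero => simp [dfac]
  | succ k ih =>
      have h2 : (2*(k+1)).factorial = (2*k+2) * ((2*k+1) * (2*k).factorial) := by
        have : 2*(k+1) = (2*k+1) + 1 := by ring
        rw [this, Nat.factorial_succ, Nat.factorial_succ]
      rw [h2, ← ih]
      show (2*k+1) * dfac k * (2 ^ (k+1) * (k+1).factorial) = _
      rw [Nat.factorial_succ]
      ring

lemma two_pow_fac_le (j : ℕ) : 2^j * j.factorial ≤ (2*j).factorial := by
  induction j with
  | zero => simp
  | succ j ih =>
      have h2 : (2*(j+1)).factorial = (2*j+2) * ((2*j+1) * (2*j).factorial) := by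
        have : 2*(j+1) = (2*j+1) + 1 := by ring
        rw [this, Nat.factorial_succ, Nat.factorial_succ]
      rw [h2]
      calc 2^(j+1) * (j+1).factorial = (2*(j+1)) * (2^j * j.factorial) := by
            rw [Nat.factorial_succ]; ring
        _ ≤ (2*(j+1)) * (2*j).factorial := Nat.mul_le_mul_left _ ih
        _ ≤ (2*j+2) * ((2*j+1) * (2*j).factorial) :=
            Nat.mul_le_mul (by omega) (Nat.le_mul_of_pos_left _ (by omega))

/-- Key combinatorial inequality: `C(2k,2j) * (2(k-j)-1)!! ≤ (2k-1)!! * C(k,j)`. -/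
lemma key_comb {j k : ℕ} (hj : j ≤ k) :
    (2*k).choose (2*j) * dfac (k-j) ≤ dfac k * k.choose j := by
  have h1 : (2*j) ≤ 2*k := by omega
  -- multiply both sides by (2j)! * 2^(k-j) * (k-j)! * 2^j * j!
  have hpos : 0 < (2*j).factorial * (2^(k-j) * (k-j).factorial) * (2^j * j.factorial) := by positivity
  apply Nat.le_of_mul_le_mul_right _ hpos
  have lhs_eq : (2*k).choose (2*j) * dfac (k-j) *
      ((2*j).factorial * (2^(k-j) * (k-j).factorial) * (2^j * j.factorial))
      = (2*k).factorial * (2^j * j.factorial) := by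
    have e1 : 2*(k-j) = 2*k - 2*j := by omega
    have := Nat.choose_mul_factorial_mul_factorial h1
    calc (2*k).choose (2*j) * dfac (k-j) *
        ((2*j).factorial * (2^(k-j) * (k-j).factorial) * (2^j * j.factorial))
        = ((2*k).choose (2*j) * (2*j).factorial * (dfac (k-j) * (2^(k-j) * (k-j).factorial)))
          * (2^j * j.factorial) := by ring
      _ = ((2*k).choose (2*j) * (2*j).factorial * (2*k - 2*j).factorial) * (2^j * j.factorial) := by
          rw [dfac_mul, e1]
      _ = (2*k).factorial * (2^j * j.factorial) := by
          rw [← mul_assoc, this]; ring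
  have rhs_eq : dfac k * k.choose j *
      ((2*j).factorial * (2^(k-j) * (k-j).factorial) * (2^j * j.factorial))
      = (2*k).factorial * (2*j).factorial := by
    have := Nat.choose_mul_factorial_mul_factorial hj
    calc dfac k * k.choose j *
        ((2*j).factorial * (2^(k-j) * (k-j).factorial) * (2^j * j.factorial))
        = (dfac k * (2^(k-j) * 2^j * (k.choose j * j.factorial * (k-j).factorial)))
          * (2*j).factorial := by ring
      _ = (dfac k * (2^k * k.factorial)) * (2*j).factorial := by
          rw [← pow_add]
          have : k - j + j = k := by omega
          rw [this, Nat.choose_mul_factorial_mul_factorial hj]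
      _ = (2*k).factorial * (2*j).factorial := by rw [dfac_mul]
  rw [lhs_eq, rhs_eq]
  exact Nat.mul_le_mul_left _ (two_pow_fac_le j)

lemma dfac_le (k : ℕ) : (dfac k : ℝ) ≤ (2*k)^k := by
  induction k with
  | zero => simp [dfac]
  | succ k ih =>
      have h1 : (dfac (k+1) : ℝ) = (2*k+1) * dfac k := by
        show ((2*k+1) * dfac k : ℕ) = ((2:ℝ)*k+1) * dfac k
        push_cast; ring
      rw [h1]
      have h2 : ((2:ℝ)*k+1) ≤ 2*(k+1) := by push_cast; linarith
      have h3 : ((2:ℝ)*k)^k ≤ (2*(k+1))^k := by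
        apply pow_le_pow_left₀ (by positivity); push_cast; linarith
      calc ((2:ℝ)*k+1) * dfac k ≤ (2*(↑k+1)) * (2*(↑k+1))^k := by
            apply mul_le_mul h2 (le_trans ih h3) (by positivity) (by positivity)
        _ = (2*((k:ℝ)+1))^(k+1) := by rw [pow_succ]; ring
        _ = (2*((k+1:ℕ):ℝ))^(k+1) := by push_cast; ring
      
open Finset

lemma even_sum (g : ℕ → ℝ) (k : ℕ) :
    ∑ m ∈ range (2*k+1), (1 + (-1:ℝ)^m) * g m = 2 * ∑ j ∈ range (k+1), g (2*j) := by
  induction k with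
  | zero => norm_num
  | succ k ih =>
      have h1 : 2*(k+1)+1 = (2*k+1) + 1 + 1 := by ring
      rw [h1, Finset.sum_range_succ, Finset.sum_range_succ, ih]
      have e1 : (-1:ℝ)^(2*k+1) = -1 := by
        rw [pow_succ, pow_mul]; simp
      have e2 : (-1:ℝ)^(2*k+1+1) = 1 := by
        rw [pow_succ, e1]; ring
      have e3 : 2*k+1+1 = 2*(k+1) := by ring
      rw [e1, e2, e3, Finset.sum_range_succ (fun j => g (2*j)) (k+1)]
      ring

lemma pair_pow (x y : ℝ) (k : ℕ) :
    (y + x)^(2*k) + (y - x)^(2*k)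
      = 2 * ∑ j ∈ range (k+1), ((2*k).choose (2*j) : ℝ) * x^(2*j) * y^(2*(k-j)) := by
  have h1 : (y + x)^(2*k) = ∑ m ∈ range (2*k+1), x^m * y^(2*k-m) * ((2*k).choose m : ℝ) := by
    rw [add_comm]; exact add_pow x y (2*k)
  have h2 : (y - x)^(2*k) = ∑ m ∈ range (2*k+1), (-1:ℝ)^m * x^m * y^(2*k-m) * ((2*k).choose m : ℝ) := by
    have e : y - x = -x + y := by ring
    rw [e, add_pow (-x) y (2*k)]
    exact Finset.sum_congr rfl fun m _ => by rw [neg_pow]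
  rw [h1, h2, ← Finset.sum_add_distrib]
  have h3 : ∀ m ∈ range (2*k+1),
      x^m * y^(2*k-m) * ((2*k).choose m : ℝ) + (-1:ℝ)^m * x^m * y^(2*k-m) * ((2*k).choose m : ℝ)
        = (1 + (-1:ℝ)^m) * (x^m * y^(2*k-m) * ((2*k).choose m : ℝ)) := by
    intro m _; ring
  rw [Finset.sum_congr rfl h3, even_sum (fun m => x^m * y^(2*k-m) * ((2*k).choose m : ℝ)) k]
  congr 1
  refine Finset.sum_congr rfl fun j hj => ?_
  have hj' : j ≤ k := by simpa using Nat.lt_succ_iff.mp (Finset.mem_range.mp hj)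
  have : 2*k - 2*j = 2*(k-j) := by omega
  rw [this]; ring

lemma khintchine {ι : Type*} [DecidableEq ι] (a : ι → ℝ) (s : Finset ι) :
    ∀ k : ℕ, ∑ t ∈ s.powerset, (∑ i ∈ t, a i - ∑ i ∈ s \ t, a i)^(2*k)
      ≤ 2^s.card * (dfac k : ℝ) * (∑ i ∈ s, (a i)^2)^k := by
  induction s using Finset.induction_on with
  | empty =>
      intro k
      cases k with
      | zero => simp [show dfac 0 = 1 from rfl]
      | succ k => simp
  | @insert i s hi ih =>
      intro k
      have hrw : ∑ t ∈ (insert i s).powerset,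
            (∑ j ∈ t, a j - ∑ j ∈ (insert i s) \ t, a j)^(2*k)
          = ∑ t ∈ s.powerset,
              2 * ∑ j ∈ range (k+1), ((2*k).choose (2*j) : ℝ) * (a i)^(2*j)
                * (∑ l ∈ t, a l - ∑ l ∈ s \ t, a l)^(2*(k-j)) := by
        rw [Finset.sum_powerset_insert hi, ← Finset.sum_add_distrib]
        refine Finset.sum_congr rfl fun t ht => ?_
        have hts : t ⊆ s := Finset.mem_powerset.mp ht
        have hit : i ∉ t := fun h => hi (hts h)
        have hisd : i ∉ s \ t := fun h => hi (Finset.mem_sdiff.mp h).1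
        have e1 : (insert i s) \ t = insert i (s \ t) :=
          Finset.insert_sdiff_of_notMem _ hit
        have e2 : (insert i s) \ (insert i t) = s \ t := by
          rw [Finset.insert_sdiff_insert]
          ext x
          simp only [Finset.mem_sdiff, Finset.mem_insert, not_or]
          exact ⟨fun ⟨h1, h2⟩ => ⟨h1, h2.2⟩,
            fun ⟨h1, h2⟩ => ⟨h1, fun he => hi (he ▸ h1), h2⟩⟩
        rw [e1, e2, Finset.sum_insert hit, Finset.sum_insert hisd]
        have lhs1 : ∑ l ∈ t, a l - (a i + ∑ l ∈ s \ t, a l)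
            = (∑ l ∈ t, a l - ∑ l ∈ s \ t, a l) - a i := by ring
        have lhs2 : a i + ∑ l ∈ t, a l - ∑ l ∈ s \ t, a l
            = (∑ l ∈ t, a l - ∑ l ∈ s \ t, a l) + a i := by ring
        rw [lhs1, lhs2, add_comm ((∑ l ∈ t, a l - ∑ l ∈ s \ t, a l - a i) ^ (2 * k))]
        exact pair_pow (a i) (∑ l ∈ t, a l - ∑ l ∈ s \ t, a l) k
      rw [hrw]
      -- swap the sums
      have hswap : ∑ t ∈ s.powerset,
            2 * ∑ j ∈ range (k+1), ((2*k).choose (2*j) : ℝ) * (a i)^(2*j)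
              * (∑ l ∈ t, a l - ∑ l ∈ s \ t, a l)^(2*(k-j))
          = 2 * ∑ j ∈ range (k+1), ((2*k).choose (2*j) : ℝ) * (a i)^(2*j)
              * (∑ t ∈ s.powerset, (∑ l ∈ t, a l - ∑ l ∈ s \ t, a l)^(2*(k-j))) := by
        rw [← Finset.mul_sum, Finset.sum_comm]
        congr 1
        refine Finset.sum_congr rfl fun j _ => ?_
        rw [Finset.mul_sum]
      rw [hswap]
      have hA : (0:ℝ) ≤ ∑ l ∈ s, (a l)^2 := Finset.sum_nonneg fun l _ => sq_nonneg _
      have step : ∀ j ∈ range (k+1),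
          ((2*k).choose (2*j) : ℝ) * (a i)^(2*j)
              * (∑ t ∈ s.powerset, (∑ l ∈ t, a l - ∑ l ∈ s \ t, a l)^(2*(k-j)))
            ≤ (dfac k : ℝ) * (k.choose j : ℝ) * ((a i)^2)^j * (2:ℝ)^s.card
                * (∑ l ∈ s, (a l)^2)^(k-j) := by
        intro j hj
        have hjk : j ≤ k := Nat.lt_succ_iff.mp (Finset.mem_range.mp hj)
        have h1 : ∑ t ∈ s.powerset, (∑ l ∈ t, a l - ∑ l ∈ s \ t, a l)^(2*(k-j))
            ≤ 2^s.card * (dfac (k-j) : ℝ) * (∑ l ∈ s, (a l)^2)^(k-j) := ih (k-j)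
        have hnn : (0:ℝ) ≤ ((2*k).choose (2*j) : ℝ) * (a i)^(2*j) := by
          apply mul_nonneg (Nat.cast_nonneg _)
          rw [pow_mul]; exact pow_nonneg (sq_nonneg _) _
        calc ((2*k).choose (2*j) : ℝ) * (a i)^(2*j)
              * (∑ t ∈ s.powerset, (∑ l ∈ t, a l - ∑ l ∈ s \ t, a l)^(2*(k-j)))
            ≤ ((2*k).choose (2*j) : ℝ) * (a i)^(2*j)
              * (2^s.card * (dfac (k-j) : ℝ) * (∑ l ∈ s, (a l)^2)^(k-j)) := by
              apply mul_le_mul_of_nonneg_left h1 hnn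
          _ = (((2*k).choose (2*j) : ℝ) * (dfac (k-j) : ℝ)) * ((a i)^2)^j
                * (2:ℝ)^s.card * (∑ l ∈ s, (a l)^2)^(k-j) := by
              rw [← pow_mul]; ring
          _ ≤ ((dfac k : ℝ) * (k.choose j : ℝ)) * ((a i)^2)^j
                * (2:ℝ)^s.card * (∑ l ∈ s, (a l)^2)^(k-j) := by
              have hkey : (((2*k).choose (2*j) : ℕ) * dfac (k-j) : ℝ)
                  ≤ ((dfac k * k.choose j : ℕ) : ℝ) := by
                exact_mod_cast key_comb hjk
              push_cast at hkey
              apply mul_le_mul_of_nonneg_right _ (pow_nonneg hA _)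
              apply mul_le_mul_of_nonneg_right _ (pow_nonneg (by norm_num : (0:ℝ) ≤ 2) _)
              apply mul_le_mul_of_nonneg_right hkey (pow_nonneg (sq_nonneg _) _)
          _ = (dfac k : ℝ) * (k.choose j : ℝ) * ((a i)^2)^j * (2:ℝ)^s.card
                * (∑ l ∈ s, (a l)^2)^(k-j) := by ring
      calc 2 * ∑ j ∈ range (k+1), ((2*k).choose (2*j) : ℝ) * (a i)^(2*j)
              * (∑ t ∈ s.powerset, (∑ l ∈ t, a l - ∑ l ∈ s \ t, a l)^(2*(k-j)))
          ≤ 2 * ∑ j ∈ range (k+1), (dfac k : ℝ) * (k.choose j : ℝ) * ((a i)^2)^j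
                * (2:ℝ)^s.card * (∑ l ∈ s, (a l)^2)^(k-j) := by
            apply mul_le_mul_of_nonneg_left (Finset.sum_le_sum step) (by norm_num)
        _ = 2 * (2:ℝ)^s.card * (dfac k : ℝ)
              * ∑ j ∈ range (k+1), ((a i)^2)^j * (∑ l ∈ s, (a l)^2)^(k-j)
                * (k.choose j : ℝ) := by
            rw [Finset.mul_sum, Finset.mul_sum]
            refine Finset.sum_congr rfl fun j _ => by ring
        _ = 2^(insert i s).card * (dfac k : ℝ) * (∑ l ∈ insert i s, (a l)^2)^k := by
            rw [← add_pow ((a i)^2) (∑ l ∈ s, (a l)^2) k,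
              Finset.card_insert_of_notMem hi, Finset.sum_insert hi, pow_succ]
            ring

end Khintchine

section SphereAux
open Finset


variable {V : Type*} [NormedAddCommGroup V] [InnerProductSpace ℝ V]
    [FiniteDimensional ℝ V] [MeasurableSpace V] [BorelSpace V]

/-- The measurable equivalence of the sphere induced by a linear isometry equivalence. -/
def sphereRotHomeo (g : V ≃ₗᵢ[ℝ] V) :
    Metric.sphere (0 : V) 1 ≃ₜ Metric.sphere (0 : V) 1 where
  toFun := sphereRot g
  invFun := sphereRot g.symm
  left_inv x := by
    apply Subtype.ext
    simp [sphereRot]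
  right_inv x := by
    apply Subtype.ext
    simp [sphereRot]
  continuous_toFun := Continuous.subtype_mk (g.continuous.comp continuous_subtype_val) _
  continuous_invFun := Continuous.subtype_mk (g.symm.continuous.comp continuous_subtype_val) _

lemma sphere_integrable_bounded (ν : Measure (Metric.sphere (0 : V) 1)) [IsProbabilityMeasure ν]
    {f : Metric.sphere (0 : V) 1 → ℝ} (hf : Continuous f) {C : ℝ} (hC : ∀ x, |f x| ≤ C) :
    Integrable f ν :=
  ⟨hf.aestronglyMeasurable,
    HasFiniteIntegral.of_bounded (C := C) (Filter.Eventually.of_forall hC)⟩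

lemma moment_eq (ν : Measure (Metric.sphere (0 : V) 1)) [IsProbabilityMeasure ν]
    (hν : ∀ g : V ≃ₗᵢ[ℝ] V, MeasurePreserving (sphereRot g) ν ν)
    (k : ℕ) {u u' : V} (hu : ‖u‖ = ‖u'‖) :
    ∫ c, ⟪(c : V), u⟫ ^ (2*k) ∂ν = ∫ c, ⟪(c : V), u'⟫ ^ (2*k) ∂ν := by
  set g : V ≃ₗᵢ[ℝ] V := Submodule.reflection (ℝ ∙ (u - u'))ᗮ with hg
  have hgu : g u = u' := Submodule.reflection_sub hu
  have hmp : MeasurePreserving ((sphereRotHomeo g).toMeasurableEquiv) ν ν := hν g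
  have := hmp.integral_comp' (fun c => ⟪(c : V), u'⟫ ^ (2*k))
  rw [← this]
  refine integral_congr_ae (Filter.Eventually.of_forall fun c => ?_)
  show ⟪(c : V), u⟫ ^ (2*k) = ⟪((sphereRot g c : Metric.sphere (0:V) 1) : V), u'⟫ ^ (2*k)
  have : ((sphereRot g c : Metric.sphere (0:V) 1) : V) = g (c : V) := rfl
  rw [this, ← hgu, LinearIsometryEquiv.inner_map_map]
lemma inner_pow_integrable (ν : Measure (Metric.sphere (0 : V) 1)) [IsProbabilityMeasure ν]
    (k : ℕ) (u : V) : Integrable (fun c : Metric.sphere (0 : V) 1 => ⟪(c : V), u⟫ ^ (2*k)) ν := by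
  apply sphere_integrable_bounded ν
  · exact (Continuous.inner continuous_subtype_val continuous_const).pow _
  · intro x
    rw [abs_pow]
    refine pow_le_pow_left₀ (abs_nonneg _) (?_ : |⟪(x : V), u⟫| ≤ |‖u‖|) _
    calc |⟪(x : V), u⟫| ≤ ‖(x : V)‖ * ‖u‖ := abs_real_inner_le_norm _ _
      _ = ‖u‖ := by
          have hx : ‖(x : V)‖ = 1 := by
            simpa only [Metric.mem_sphere, dist_zero_right] using x.2
          rw [hx, one_mul]
      _ ≤ |‖u‖| := le_abs_self _

lemma sphere_norm_one (c : Metric.sphere (0 : V) 1) : ‖(c : V)‖ = 1 := by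
  simpa only [Metric.mem_sphere, dist_zero_right] using c.2

lemma moment_le (ν : Measure (Metric.sphere (0 : V) 1)) [IsProbabilityMeasure ν]
    (hν : ∀ g : V ≃ₗᵢ[ℝ] V, MeasurePreserving (sphereRot g) ν ν)
    (k : ℕ) {w : V} (hw : ‖w‖ = 1) :
    ∫ c, ⟪(c : V), w⟫ ^ (2*k) ∂ν
      ≤ (dfac k : ℝ) / (Module.finrank ℝ V : ℝ)^k := by
  set d := Module.finrank ℝ V with hdd
  have hVn : Nontrivial V := by
    refine ⟨w, 0, fun h => ?_⟩
    rw [h, norm_zero] at hw; norm_num at hw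
  have hd : 0 < d := Module.finrank_pos
  have hdR : (0:ℝ) < d := by exact_mod_cast hd
  set b : OrthonormalBasis (Fin d) ℝ V := stdOrthonormalBasis ℝ V with hb
  set m := ∫ c, ⟪(c : V), w⟫ ^ (2*k) ∂ν with hm
  -- the test vectors
  set u : Finset (Fin d) → V := fun t =>
    (Real.sqrt d)⁻¹ • (∑ i ∈ t, b i - ∑ i ∈ univ \ t, b i) with hu
  have hsq : Real.sqrt d * Real.sqrt d = d := Real.mul_self_sqrt (le_of_lt hdR)
  have hsqpos : 0 < Real.sqrt d := Real.sqrt_pos.mpr hdR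
  have hinner : ∀ (c : V) (t : Finset (Fin d)),
      ⟪c, u t⟫ = (Real.sqrt d)⁻¹ *
        (∑ i ∈ t, ⟪c, b i⟫ - ∑ i ∈ univ \ t, ⟪c, b i⟫) := by
    intro c t
    rw [hu]
    simp only [real_inner_smul_right, inner_sub_right, inner_sum]
  have hnorm : ∀ t : Finset (Fin d), ‖u t‖ = 1 := by
    intro t
    have hz : (∑ i ∈ t, b i - ∑ i ∈ univ \ t, b i)
        = ∑ i : Fin d, (if i ∈ t then (1:ℝ) else -1) • b i := by
      rw [← Finset.sum_filter_add_sum_filter_not univ (fun i => i ∈ t)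
        (fun i => (if i ∈ t then (1:ℝ) else -1) • b i)]
      have e1 : univ.filter (fun i => i ∈ t) = t := by
        ext i; simp
      have e2 : univ.filter (fun i => ¬ i ∈ t) = univ \ t := by
        ext i; simp
      rw [e1, e2]
      rw [sub_eq_add_neg, ← Finset.sum_neg_distrib]
      congr 1
      · exact Finset.sum_congr rfl fun i hi => by simp [hi]
      · refine Finset.sum_congr rfl fun i hi => ?_
        have : i ∉ t := (Finset.mem_sdiff.mp hi).2
        simp [this]
    have hzz : ⟪(∑ i ∈ t, b i - ∑ i ∈ univ \ t, b i),
        (∑ i ∈ t, b i - ∑ i ∈ univ \ t, b i)⟫ = (d:ℝ) := by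
      rw [hz]
      rw [b.orthonormal.inner_sum]
      have : ∀ i : Fin d, (starRingEnd ℝ) (if i ∈ t then (1:ℝ) else -1)
          * (if i ∈ t then (1:ℝ) else -1) = 1 := by
        intro i; by_cases h : i ∈ t <;> simp [h]
      rw [Finset.sum_congr rfl fun i _ => this i]
      simp [hdd]
    have hnz : ‖(∑ i ∈ t, b i - ∑ i ∈ univ \ t, b i)‖ = Real.sqrt d := by
      rw [norm_eq_sqrt_real_inner, hzz]
    rw [hu, norm_smul, hnz]
    simp only [norm_inv, Real.norm_eq_abs, abs_of_pos hsqpos]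
    field_simp
  -- each moment equals m
  have hmom : ∀ t : Finset (Fin d), ∫ c, ⟪(c : V), u t⟫ ^ (2*k) ∂ν = m := by
    intro t
    rw [hm]
    exact moment_eq ν hν k (by rw [hnorm t, hw])
  have hcard : ((univ : Finset (Fin d)).powerset).card = 2^d := by
    rw [Finset.card_powerset, Finset.card_univ, Fintype.card_fin]
  have hsum : (2^d : ℝ) * m
      = ∫ c, ∑ t ∈ (univ : Finset (Fin d)).powerset, ⟪(c : V), u t⟫ ^ (2*k) ∂ν := by
    rw [integral_finset_sum _ (fun t _ => inner_pow_integrable ν k (u t))]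
    rw [Finset.sum_congr rfl (fun t _ => hmom t), Finset.sum_const, hcard]
    simp [nsmul_eq_mul]
  -- pointwise bound
  have hpt : ∀ c : Metric.sphere (0 : V) 1,
      ∑ t ∈ (univ : Finset (Fin d)).powerset, ⟪(c : V), u t⟫ ^ (2*k)
        ≤ ((d:ℝ)⁻¹)^k * (2^d * (dfac k : ℝ)) := by
    intro c
    have hsub : ∑ i : Fin d, ⟪(c:V), b i⟫^2 = 1 := by
      have h1 := b.sum_inner_mul_inner (c : V) (c : V)
      have h2 : ∀ i : Fin d, ⟪(c:V), b i⟫ * ⟪b i, (c:V)⟫ = ⟪(c:V), b i⟫^2 := by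
        intro i; rw [real_inner_comm (b i), sq]
      rw [Finset.sum_congr rfl fun i _ => h2 i] at h1
      rw [h1, real_inner_self_eq_norm_mul_norm, sphere_norm_one, one_mul]
    have hexp : ∀ t : Finset (Fin d),
        ⟪(c : V), u t⟫ ^ (2*k)
          = ((d:ℝ)⁻¹)^k * (∑ i ∈ t, ⟪(c:V), b i⟫ - ∑ i ∈ univ \ t, ⟪(c:V), b i⟫)^(2*k) := by
      intro t
      rw [hinner, mul_pow]
      congr 1
      rw [pow_mul, ← Real.sqrt_inv]
      rw [Real.sq_sqrt (by positivity)]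
    rw [Finset.sum_congr rfl fun t _ => hexp t, ← Finset.mul_sum]
    apply mul_le_mul_of_nonneg_left _ (by positivity)
    have hkh := khintchine (fun i : Fin d => ⟪(c:V), b i⟫) univ k
    rw [Finset.card_univ, Fintype.card_fin, hsub, one_pow, mul_one] at hkh
    exact hkh
  -- integrate the bound
  have hle : (2^d : ℝ) * m ≤ ((d:ℝ)⁻¹)^k * (2^d * (dfac k : ℝ)) := by
    rw [hsum]
    calc ∫ c, ∑ t ∈ (univ : Finset (Fin d)).powerset, ⟪(c : V), u t⟫ ^ (2*k) ∂ν
        ≤ ∫ _c, ((d:ℝ)⁻¹)^k * (2^d * (dfac k : ℝ)) ∂ν := by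
          apply integral_mono _ (integrable_const _) hpt
          exact integrable_finset_sum _ (fun t _ => inner_pow_integrable ν k (u t))
      _ = ((d:ℝ)⁻¹)^k * (2^d * (dfac k : ℝ)) := by
          rw [integral_const]; simp
  have h2d : (0:ℝ) < 2^d := by positivity
  calc m = ((2^d : ℝ) * m) / (2^d : ℝ) := by field_simp
    _ ≤ (((d:ℝ)⁻¹)^k * (2^d * (dfac k : ℝ))) / (2^d : ℝ) := by
        apply div_le_div_of_nonneg_right hle h2d.le
    _ = (dfac k : ℝ) / (d:ℝ)^k := by
        field_simp
        rw [one_div, inv_pow, mul_comm, ← mul_assoc, mul_inv_cancel₀ (pow_ne_zero _ hdR.ne'), one_mul]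

open Finset

end SphereAux

/-- **Lemma 3.5.** Let `G` be a compact group acting by isometries on a
`d`-dimensional real inner product space `V`, `v ∈ V`, and `k ≥ 1`.  Then
`∫_{S(V)} (∫_G ⟪c, gv⟫^{2k} dg)^{1/(2k)} dc ≤ √(2k⟪v,v⟫/d)`, where `dc` is the
rotation-invariant probability measure on the unit sphere of `V` and `dg` is the Haar
probability measure on `G`. -/
theorem average_L2k_norm_le
    {G V : Type*} [Group G] [TopologicalSpace G] [IsTopologicalGroup G] [CompactSpace G]
    [MeasurableSpace G] [BorelSpace G]
    [NormedAddCommGroup V] [InnerProductSpace ℝ V] [FiniteDimensional ℝ V]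
    [MeasurableSpace V] [BorelSpace V]
    (μ : Measure G) [μ.IsHaarMeasure] [IsProbabilityMeasure μ]
    (ρ : G →* (V ≃ₗᵢ[ℝ] V)) (hcont : ∀ w : V, Continuous fun g : G => ρ g w)
    (ν : Measure (Metric.sphere (0 : V) 1)) [IsProbabilityMeasure ν]
    (hν : ∀ g : V ≃ₗᵢ[ℝ] V, MeasurePreserving (sphereRot g) ν ν)
    (v : V) (k : ℕ) (hk : 0 < k) :
    ∫ c, (∫ g, ⟪(c : V), ρ g v⟫ ^ (2 * k) ∂μ) ^ ((1 : ℝ) / (2 * k)) ∂ν ≤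
      Real.sqrt (2 * k * ⟪v, v⟫ / (Module.finrank ℝ V)) := by
  have hkR : (0:ℝ) < 2 * (k:ℝ) := by positivity
  have hp0 : (0:ℝ) < (1 : ℝ) / (2 * (k:ℝ)) := by positivity
  set p : ℝ := (1 : ℝ) / (2 * (k:ℝ)) with hp
  have hp1 : p ≤ 1 := by
    rw [hp, div_le_one hkR]
    have : (1:ℝ) ≤ (k:ℝ) := by exact_mod_cast hk
    linarith
  by_cases hv : v = 0
  · subst hv
    have hz : ∀ c : Metric.sphere (0 : V) 1,
        (∫ g, ⟪(c : V), ρ g 0⟫ ^ (2 * k) ∂μ) ^ p = 0 := by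
      intro c
      have : (fun g : G => ⟪(c : V), ρ g 0⟫ ^ (2 * k)) = fun _ => 0 := by
        funext g
        rw [map_zero, inner_zero_right, zero_pow (by omega)]
      rw [this, integral_zero, Real.zero_rpow (ne_of_gt hp0)]
    rw [show (fun c : Metric.sphere (0 : V) 1 =>
        (∫ g, ⟪(c : V), ρ g 0⟫ ^ (2 * k) ∂μ) ^ p) = fun _ => 0 from funext hz]
    rw [integral_zero]
    exact Real.sqrt_nonneg _
  -- main case
  have hVn : Nontrivial V := ⟨v, 0, hv⟩
  set d := Module.finrank ℝ V with hdd
  have hd : 0 < d := Module.finrank_pos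
  have hdR : (0:ℝ) < d := by exact_mod_cast hd
  have hvn : 0 < ‖v‖ := norm_pos_iff.mpr hv
  set M : ℝ := ‖v‖^(2*k) with hM
  have hM0 : 0 < M := by positivity
  set B : ℝ := (dfac k : ℝ) / (d:ℝ)^k * M with hB
  have hB0 : 0 < B := by
    apply mul_pos _ hM0
    exact div_pos (by exact_mod_cast dfac_pos k) (by positivity)
  set Φ : Metric.sphere (0 : V) 1 → G → ℝ :=
    fun c g => ⟪(c : V), ρ g v⟫ ^ (2 * k) with hΦ
  have hΦcont : Continuous fun q : Metric.sphere (0 : V) 1 × G => Φ q.1 q.2 := by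
    apply Continuous.pow
    exact Continuous.inner (continuous_subtype_val.comp continuous_fst)
      ((hcont v).comp continuous_snd)
  have hΦbdd : ∀ (c : Metric.sphere (0 : V) 1) (g : G), |Φ c g| ≤ M := by
    intro c g
    show |⟪(c : V), ρ g v⟫ ^ (2 * k)| ≤ ‖v‖ ^ (2 * k)
    rw [abs_pow]
    apply pow_le_pow_left₀ (abs_nonneg _)
    calc |⟪(c : V), ρ g v⟫| ≤ ‖(c:V)‖ * ‖ρ g v‖ := abs_real_inner_le_norm _ _
      _ = ‖v‖ := by rw [sphere_norm_one, one_mul, LinearIsometryEquiv.norm_map]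
  have hΦnn : ∀ (c : Metric.sphere (0 : V) 1) (g : G), 0 ≤ Φ c g := by
    intro c g
    show 0 ≤ ⟪(c : V), ρ g v⟫ ^ (2 * k)
    rw [pow_mul]
    exact pow_nonneg (sq_nonneg _) k
  set f : Metric.sphere (0 : V) 1 → ℝ := fun c => ∫ g, Φ c g ∂μ with hf
  have hfnn : ∀ c, 0 ≤ f c := fun c => integral_nonneg (hΦnn c)
  have hfbdd : ∀ c, f c ≤ M := by
    intro c
    calc f c ≤ ∫ _g, M ∂μ := by
          apply integral_mono_of_nonneg (Filter.Eventually.of_forall (hΦnn c))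
            (integrable_const M)
          exact Filter.Eventually.of_forall fun g => (abs_le.mp (hΦbdd c g)).2
      _ = M := by rw [integral_const]; simp
  have hfcont : Continuous f := by
    apply continuous_of_dominated (bound := fun _ => M)
    · exact fun c => (hΦcont.comp (Continuous.prodMk_right c)).aestronglyMeasurable
    · exact fun c => Filter.Eventually.of_forall fun g => by
        rw [Real.norm_eq_abs]; exact hΦbdd c g
    · exact integrable_const M
    · exact Filter.Eventually.of_forall fun g =>
        hΦcont.comp (Continuous.prodMk_left g)
  -- Fubini and the moment bound
  have hI : ∫ c, f c ∂ν ≤ B := by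
    have hint : Integrable (Function.uncurry Φ) (ν.prod μ) := by
      refine ⟨hΦcont.aestronglyMeasurable, ?_⟩
      apply HasFiniteIntegral.of_bounded (C := M)
      exact Filter.Eventually.of_forall fun q => by
        rw [Real.norm_eq_abs]; exact hΦbdd q.1 q.2
    rw [hf]
    rw [integral_integral_swap hint]
    have hin : ∀ g : G, ∫ c, Φ c g ∂ν ≤ B := by
      intro g
      set w : V := ρ g v with hw
      have hwn : ‖w‖ = ‖v‖ := LinearIsometryEquiv.norm_map _ _
      set u : V := ‖v‖⁻¹ • w with huu
      have hun : ‖u‖ = 1 := by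
        rw [huu, norm_smul, norm_inv, norm_norm, hwn]
        field_simp
      have hwu : w = ‖v‖ • u := by
        rw [huu, smul_smul]
        field_simp
        rw [one_smul]
      have hΦeq : ∀ c : Metric.sphere (0 : V) 1, Φ c g = M * ⟪(c:V), u⟫^(2*k) := by
        intro c
        show ⟪(c : V), ρ g v⟫ ^ (2 * k) = M * ⟪(c:V), u⟫^(2*k)
        rw [hM, ← hw, hwu, inner_smul_right, mul_pow]
      rw [show (fun c : Metric.sphere (0 : V) 1 => Φ c g)
          = fun c : Metric.sphere (0 : V) 1 => M * ⟪(c:V), u⟫^(2*k) from funext hΦeq]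
      rw [integral_const_mul]
      rw [hB]
      rw [mul_comm ((dfac k : ℝ) / (d:ℝ)^k) M]
      exact mul_le_mul_of_nonneg_left (moment_le ν hν k hun) hM0.le
    calc ∫ g, (∫ c, Φ c g ∂ν) ∂μ ≤ ∫ _g, B ∂μ := by
          apply integral_mono_of_nonneg
          · exact Filter.Eventually.of_forall fun g => integral_nonneg (fun c => hΦnn c g)
          · exact integrable_const B
          · exact Filter.Eventually.of_forall hin
      _ = B := by rw [integral_const]; simp
  -- Young / AM-GM step
  have hfpInt : Integrable (fun c => (f c) ^ p) ν := by
    apply sphere_integrable_bounded ν (C := M ^ p)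
    · exact hfcont.rpow_const fun c => Or.inr hp0.le
    · intro c
      rw [abs_of_nonneg (Real.rpow_nonneg (hfnn c) p)]
      exact Real.rpow_le_rpow (hfnn c) (hfbdd c) hp0.le
  have hfInt : Integrable f ν := by
    apply sphere_integrable_bounded ν hfcont (C := M)
    intro c
    rw [abs_of_nonneg (hfnn c)]
    exact hfbdd c
  have hyoung : ∀ c, (f c) ^ p * B ^ (1 - p) ≤ p * f c + (1 - p) * B := by
    intro c
    exact Real.geom_mean_le_arith_mean2_weighted hp0.le (by linarith) (hfnn c) hB0.le
      (by ring)
  have hkey : (∫ c, (f c) ^ p ∂ν) * B ^ (1 - p) ≤ B := by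
    calc (∫ c, (f c) ^ p ∂ν) * B ^ (1 - p) = ∫ c, (f c) ^ p * B ^ (1 - p) ∂ν := by
          rw [integral_mul_const]
      _ ≤ ∫ c, (p * f c + (1 - p) * B) ∂ν := by
          apply integral_mono (hfpInt.mul_const _) _ hyoung
          exact (hfInt.const_mul p).add (integrable_const _)
      _ = p * (∫ c, f c ∂ν) + (1 - p) * B := by
          rw [integral_add (hfInt.const_mul p) (integrable_const _), integral_const_mul,
            integral_const]
          simp
      _ ≤ p * B + (1 - p) * B := by
          have := mul_le_mul_of_nonneg_left hI hp0.le
          linarith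
      _ = B := by ring
  have hBp : ∫ c, (f c) ^ p ∂ν ≤ B ^ p := by
    have hB1p : 0 < B ^ (1 - p) := Real.rpow_pos_of_pos hB0 _
    rw [← le_div_iff₀ hB1p] at hkey
    have : B / B ^ (1 - p) = B ^ p := by
      rw [div_eq_iff (ne_of_gt hB1p), ← Real.rpow_add hB0]
      have h1 : p + (1 - p) = 1 := by ring
      rw [h1, Real.rpow_one]
    rwa [this] at hkey
  -- final computation
  have hfin : B ^ p ≤ Real.sqrt (2 * k * ⟪v, v⟫ / d) := by
    set q : ℝ := Real.sqrt (2*(k:ℝ)/(d:ℝ)) * ‖v‖ with hq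
    have hq0 : 0 ≤ q := by positivity
    have hBB2 : B ≤ q^(2*k) := by
      have h1 : q^(2*k) = ((2*(k:ℝ))/(d:ℝ))^k * M := by
        rw [hq, hM, mul_pow]
        congr 1
        rw [pow_mul, Real.sq_sqrt (by positivity)]
      rw [h1, hB]
      apply mul_le_mul_of_nonneg_right _ hM0.le
      rw [div_pow]
      exact div_le_div_of_nonneg_right (dfac_le k) (by positivity) |>.trans_eq rfl
    have hqp : (q^(2*k) : ℝ) ^ p = q := by
      rw [← Real.rpow_natCast q (2*k), ← Real.rpow_mul hq0]
      have : ((2*k : ℕ):ℝ) * p = 1 := by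
        rw [hp]
        push_cast
        field_simp
      rw [this, Real.rpow_one]
    have hqs : q = Real.sqrt (2 * k * ⟪v, v⟫ / d) := by
      rw [hq, norm_eq_sqrt_real_inner, ← Real.sqrt_mul (by positivity)]
      congr 1
      ring
    calc B ^ p ≤ (q^(2*k)) ^ p := Real.rpow_le_rpow hB0.le hBB2 hp0.le
      _ = q := hqp
      _ = _ := hqs
  calc ∫ c, (f c) ^ p ∂ν ≤ B ^ p := hBp
    _ ≤ _ := hfin
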